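/- Let (Y, ρ) be a metric space and k : Y × Y → ℝ a measurable kernel with ‖k‖_∞ ≤ K that is L_k-Lipschitz in each argument separately. For y ∈ Y and a Borel probability measure r on Y, define the kernel score ℓ_KS(y, r) := k(y, y) − 2 E_{Y'∼r}[k(y, Y')] + E_{Y',Y''∼r}[k(Y', Y'')], where Y', Y'' are independent with law r, and let d(r, s) := sup{ |∫f dr − ∫f ds| : ‖f‖_∞ ≤ 1, Lip(f) ≤ 1 } be the bounded-Lipschitz distance. Then for all y ∈ Y and all Borel probability measures r, s on Y, |ℓ_KS(y, r) − ℓ_KS(y, s)| ≤ 4M d(r, s), where M := max{K, L_k}. -/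
import Mathlib


open MeasureTheory

noncomputable section

/-- The bounded–Lipschitz distance
`d(r, s) = sup { |∫ f dr − ∫ f ds| : ‖f‖_∞ ≤ 1, Lip(f) ≤ 1 }` on probability laws. -/
def blDist {Y : Type*} [MeasurableSpace Y] [PseudoMetricSpace Y]
    (r s : Measure Y) : ℝ :=
  ⨆ f : {f : Y → ℝ // (∀ y, |f y| ≤ 1) ∧ LipschitzWith 1 f},
    |(∫ y, f.1 y ∂r) - ∫ y, f.1 y ∂s|

/-- The kernel score `ℓ_KS(y, r) = k(y,y) − 2 E_{Y'∼r}[k(y,Y')] + E_{Y',Y''∼r}[k(Y',Y'')]`,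
where `Y', Y''` are independent with law `r`; it equals the squared MMD between the Dirac
measure at `y` and `r`. -/
def kernelScore {Y : Type*} [MeasurableSpace Y] (k : Y → Y → ℝ) (y : Y) (r : Measure Y) : ℝ :=
  k y y - 2 * (∫ y', k y y' ∂r) + ∫ y', (∫ y'', k y' y'' ∂r) ∂r

section Aux

lemma integrable_of_bdd {α : Type*} [MeasurableSpace α] (μ : Measure α) [IsFiniteMeasure μ]
    {f : α → ℝ} (hm : AEStronglyMeasurable f μ) (C : ℝ) (hb : ∀ y, |f y| ≤ C) :
    Integrable f μ :=
  ⟨hm, HasFiniteIntegral.of_bounded (C := C) (ae_of_all _ fun y => by simpa using hb y)⟩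

variable {Y : Type*} [MeasurableSpace Y] [PseudoMetricSpace Y] [OpensMeasurableSpace Y]

lemma blDist_bddAbove (r s : Measure Y) [IsProbabilityMeasure r] [IsProbabilityMeasure s] :
    BddAbove (Set.range fun f : {f : Y → ℝ // (∀ y, |f y| ≤ 1) ∧ LipschitzWith 1 f} =>
      |(∫ y, f.1 y ∂r) - ∫ y, f.1 y ∂s|) := by
  refine ⟨2, ?_⟩
  rintro x ⟨⟨f, hb, _⟩, rfl⟩
  have h1 : |∫ y, f y ∂r| ≤ 1 := by
    have := norm_integral_le_of_norm_le_const (μ := r) (f := f) (C := 1)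
      (ae_of_all _ fun y => by simpa using hb y)
    simpa using this
  have h2 : |∫ y, f y ∂s| ≤ 1 := by
    have := norm_integral_le_of_norm_le_const (μ := s) (f := f) (C := 1)
      (ae_of_all _ fun y => by simpa using hb y)
    simpa using this
  calc |(∫ y, f y ∂r) - ∫ y, f y ∂s| ≤ |∫ y, f y ∂r| + |∫ y, f y ∂s| := abs_sub _ _
    _ ≤ 2 := by linarith

/-- Key: a function bounded by `M` and `M`-Lipschitz witnesses `M * blDist`. -/
lemma abs_integral_sub_le (r s : Measure Y) [IsProbabilityMeasure r] [IsProbabilityMeasure s]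
    (M : NNReal) (f : Y → ℝ) (hb : ∀ y, |f y| ≤ M) (hl : LipschitzWith M f) :
    |(∫ y, f y ∂r) - ∫ y, f y ∂s| ≤ (M : ℝ) * blDist r s := by
  rcases eq_or_ne M 0 with rfl | hM
  · have hf : ∀ y, f y = 0 := fun y => abs_nonpos_iff.mp (by simpa using hb y)
    simp [funext hf]
  · have hMpos : (0:ℝ) < M := by positivity
    set g : Y → ℝ := fun y => (M : ℝ)⁻¹ * f y with hg
    have hgb : ∀ y, |g y| ≤ 1 := by
      intro y
      rw [hg]
      have : |(M : ℝ)⁻¹ * f y| = (M:ℝ)⁻¹ * |f y| := by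
        rw [abs_mul, abs_of_nonneg (by positivity)]
      rw [this]
      calc (M:ℝ)⁻¹ * |f y| ≤ (M:ℝ)⁻¹ * M := by
            exact mul_le_mul_of_nonneg_left (hb y) (by positivity)
        _ = 1 := inv_mul_cancel₀ (ne_of_gt hMpos)
    have hgl : LipschitzWith 1 g := by
      apply LipschitzWith.of_dist_le_mul
      intro x y
      have h1 := hl.dist_le_mul x y
      rw [Real.dist_eq] at h1
      rw [Real.dist_eq, NNReal.coe_one, one_mul]
      have h : |g x - g y| = (M:ℝ)⁻¹ * |f x - f y| := by
        rw [hg]; rw [← mul_sub, abs_mul, abs_of_nonneg (by positivity)]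
      rw [h]
      calc (M:ℝ)⁻¹ * |f x - f y| ≤ (M:ℝ)⁻¹ * ((M:ℝ) * dist x y) := by
            exact mul_le_mul_of_nonneg_left h1 (by positivity)
        _ = dist x y := by field_simp
      
    have hle : |(∫ y, g y ∂r) - ∫ y, g y ∂s| ≤ blDist r s :=
      le_ciSup (blDist_bddAbove r s) (⟨g, hgb, hgl⟩ :
        {f : Y → ℝ // (∀ y, |f y| ≤ 1) ∧ LipschitzWith 1 f})
    have hint : ∀ μ : Measure Y, ∫ y, g y ∂μ = (M:ℝ)⁻¹ * ∫ y, f y ∂μ := by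
      intro μ; rw [hg]; exact integral_const_mul _ _
    rw [hint r, hint s, ← mul_sub, abs_mul, abs_of_nonneg (by positivity)] at hle
    calc |(∫ y, f y ∂r) - ∫ y, f y ∂s|
        = (M:ℝ) * ((M:ℝ)⁻¹ * |(∫ y, f y ∂r) - ∫ y, f y ∂s|) := by field_simp
      _ ≤ (M:ℝ) * blDist r s := mul_le_mul_of_nonneg_left hle (le_of_lt hMpos)

end Aux

/-- **Lipschitz property of the kernel score in its measure argument.**
If `k` is a measurable kernel with `‖k‖_∞ ≤ K` which is `L_k`-Lipschitz in each argument
separately, then, with `M := max{K, L_k}`, for all `y` and Borel probability measures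
`r, s`, `|ℓ_KS(y, r) − ℓ_KS(y, s)| ≤ 4 M d(r, s)`. -/
theorem kernelScore_lipschitz_in_measure
    {Y : Type*} [MeasurableSpace Y] [PseudoMetricSpace Y] [OpensMeasurableSpace Y]
    (k : Y → Y → ℝ) (hkmeas : Measurable (Function.uncurry k))
    (K Lk : NNReal) (hK : ∀ y u, |k y u| ≤ K)
    (hLip₁ : ∀ y, LipschitzWith Lk (k y))
    (hLip₂ : ∀ y, LipschitzWith Lk fun u => k u y)
    (y : Y) (r s : Measure Y) [IsProbabilityMeasure r] [IsProbabilityMeasure s] :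
    |kernelScore k y r - kernelScore k y s| ≤ 4 * (max K Lk : NNReal) * blDist r s := by
  set M : NNReal := max K Lk with hM
  set d : ℝ := blDist r s with hd
  -- basic measurability
  have hmeas1 : ∀ u : Y, Measurable (k u) := fun u =>
    hkmeas.comp (measurable_const.prodMk measurable_id)
  have hmeas2 : ∀ v : Y, Measurable (fun u => k u v) := fun v =>
    hkmeas.comp (measurable_id.prodMk measurable_const)
  -- bound/Lipschitz hypotheses relative to M
  have hKM : (K : ℝ) ≤ M := by exact_mod_cast le_max_left K Lk
  have hLM : Lk ≤ M := le_max_right K Lk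
  -- key application 1 : bounded M-Lipschitz f gives M*d bound
  have key : ∀ f : Y → ℝ, (∀ u, |f u| ≤ K) → LipschitzWith Lk f →
      |(∫ u, f u ∂r) - ∫ u, f u ∂s| ≤ (M : ℝ) * d := by
    intro f hb hl
    exact abs_integral_sub_le r s M f (fun u => (hb u).trans hKM) (hl.weaken hLM)
  -- integrability of slices
  have hint : ∀ (μ : Measure Y) [IsProbabilityMeasure μ], ∀ u : Y,
      Integrable (k u) μ := by
    intro μ _ u
    exact integrable_of_bdd μ (hmeas1 u).aestronglyMeasurable K (hK u)
  have hint2 : ∀ (μ : Measure Y) [IsProbabilityMeasure μ], ∀ v : Y,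
      Integrable (fun u => k u v) μ := by
    intro μ _ v
    exact integrable_of_bdd μ (hmeas2 v).aestronglyMeasurable K (fun u => hK u v)
  -- the averaged kernels
  set Ir : Y → ℝ := fun u => ∫ v, k u v ∂r with hIr
  set Is : Y → ℝ := fun u => ∫ v, k u v ∂s with hIs
  set Jr : Y → ℝ := fun v => ∫ u, k u v ∂r with hJr
  set Js : Y → ℝ := fun v => ∫ u, k u v ∂s with hJs
  -- Lipschitz property of averaged kernels
  have lip_avg1 : ∀ (μ : Measure Y) [IsProbabilityMeasure μ],
      LipschitzWith Lk (fun u => ∫ v, k u v ∂μ) := by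
    intro μ _
    apply LipschitzWith.of_dist_le_mul
    intro a b
    rw [Real.dist_eq, ← integral_sub (hint μ a) (hint μ b)]
    have hb : ∀ᵐ v ∂μ, ‖k a v - k b v‖ ≤ (Lk : ℝ) * dist a b := by
      refine ae_of_all _ fun v => ?_
      have := (hLip₂ v).dist_le_mul a b
      simpa [Real.dist_eq] using this
    have := norm_integral_le_of_norm_le_const hb
    simpa using this
  have lip_avg2 : ∀ (μ : Measure Y) [IsProbabilityMeasure μ],
      LipschitzWith Lk (fun v => ∫ u, k u v ∂μ) := by
    intro μ _
    apply LipschitzWith.of_dist_le_mul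
    intro a b
    rw [Real.dist_eq, ← integral_sub (hint2 μ a) (hint2 μ b)]
    have hb : ∀ᵐ u ∂μ, ‖k u a - k u b‖ ≤ (Lk : ℝ) * dist a b := by
      refine ae_of_all _ fun u => ?_
      have := (hLip₁ u).dist_le_mul a b
      simpa [Real.dist_eq] using this
    have := norm_integral_le_of_norm_le_const hb
    simpa using this
  -- boundedness of averaged kernels
  have bdd_avg1 : ∀ (μ : Measure Y) [IsProbabilityMeasure μ], ∀ u : Y,
      |∫ v, k u v ∂μ| ≤ (K : ℝ) := by
    intro μ _ u
    have := norm_integral_le_of_norm_le_const (μ := μ) (f := k u) (C := K)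
      (ae_of_all _ fun v => by simpa using hK u v)
    simpa using this
  have bdd_avg2 : ∀ (μ : Measure Y) [IsProbabilityMeasure μ], ∀ v : Y,
      |∫ u, k u v ∂μ| ≤ (K : ℝ) := by
    intro μ _ v
    have := norm_integral_le_of_norm_le_const (μ := μ) (f := fun u => k u v) (C := K)
      (ae_of_all _ fun u => by simpa using hK u v)
    simpa using this
  -- integrability of averaged kernels (Lipschitz ⇒ continuous ⇒ measurable)
  have int_avg : ∀ (μ ν : Measure Y) [IsProbabilityMeasure μ] [IsProbabilityMeasure ν],
      Integrable (fun u => ∫ v, k u v ∂ν) μ := by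
    intro μ ν _ _
    exact integrable_of_bdd μ ((lip_avg1 ν).continuous.measurable).aestronglyMeasurable
      K (bdd_avg1 ν)
  have int_avg2 : ∀ (μ ν : Measure Y) [IsProbabilityMeasure μ] [IsProbabilityMeasure ν],
      Integrable (fun v => ∫ u, k u v ∂ν) μ := by
    intro μ ν _ _
    exact integrable_of_bdd μ ((lip_avg2 ν).continuous.measurable).aestronglyMeasurable
      K (bdd_avg2 ν)
  -- Step 1
  have T1 : |(∫ u, k y u ∂r) - ∫ u, k y u ∂s| ≤ (M : ℝ) * d :=
    key (k y) (hK y) (hLip₁ y)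
  -- Step 2 : |∫ Ir dr − ∫ Is dr| ≤ M d
  have T2 : |(∫ u, Ir u ∂r) - ∫ u, Is u ∂r| ≤ (M : ℝ) * d := by
    rw [← integral_sub (int_avg r r) (int_avg r s)]
    have hb : ∀ᵐ u ∂r, ‖Ir u - Is u‖ ≤ (M : ℝ) * d := by
      refine ae_of_all _ fun u => ?_
      have := key (k u) (hK u) (hLip₁ u)
      simpa [hIr, hIs] using this
    have := norm_integral_le_of_norm_le_const hb
    simpa using this
  -- Fubini : ∫ Is dμ = ∫ Jμ ds
  have fub : ∀ (μ : Measure Y) [IsProbabilityMeasure μ],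
      ∫ u, Is u ∂μ = ∫ v, (∫ u, k u v ∂μ) ∂s := by
    intro μ _
    refine integral_integral_swap ?_
    exact integrable_of_bdd (μ.prod s)
      hkmeas.aestronglyMeasurable K (fun p => hK p.1 p.2)
  -- Step 3 : |∫ Jr ds − ∫ Js ds| ≤ M d
  have T3 : |(∫ v, Jr v ∂s) - ∫ v, Js v ∂s| ≤ (M : ℝ) * d := by
    rw [← integral_sub (int_avg2 s r) (int_avg2 s s)]
    have hb : ∀ᵐ v ∂s, ‖Jr v - Js v‖ ≤ (M : ℝ) * d := by
      refine ae_of_all _ fun v => ?_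
      have := key (fun u => k u v) (fun u => hK u v) (hLip₂ v)
      simpa [hJr, hJs] using this
    have := norm_integral_le_of_norm_le_const hb
    simpa using this
  -- assemble
  have hdecomp : kernelScore k y r - kernelScore k y s =
      -2 * ((∫ u, k y u ∂r) - ∫ u, k y u ∂s)
      + (((∫ u, Ir u ∂r) - ∫ u, Is u ∂r) + ((∫ v, Jr v ∂s) - ∫ v, Js v ∂s)) := by
    have h1 : ∫ u, Is u ∂r = ∫ v, Jr v ∂s := fub r
    have h2 : ∫ u, Is u ∂s = ∫ v, Js v ∂s := fub s
    simp only [kernelScore, hIr, hIs, hJr, hJs] at *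
    rw [← h1, ← h2]
    ring
  rw [hdecomp]
  calc |(-2 * ((∫ u, k y u ∂r) - ∫ u, k y u ∂s)
      + (((∫ u, Ir u ∂r) - ∫ u, Is u ∂r) + ((∫ v, Jr v ∂s) - ∫ v, Js v ∂s)))|
      ≤ 2 * |(∫ u, k y u ∂r) - ∫ u, k y u ∂s|
        + (|(∫ u, Ir u ∂r) - ∫ u, Is u ∂r| + |(∫ v, Jr v ∂s) - ∫ v, Js v ∂s|) := by
        calc _ ≤ |(-2 : ℝ) * ((∫ u, k y u ∂r) - ∫ u, k y u ∂s)|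
              + |((∫ u, Ir u ∂r) - ∫ u, Is u ∂r) + ((∫ v, Jr v ∂s) - ∫ v, Js v ∂s)| :=
              abs_add_le _ _
          _ ≤ _ := by
              rw [abs_mul]
              gcongr
              · simp
              · exact abs_add_le _ _
    _ ≤ 2 * ((M:ℝ) * d) + ((M:ℝ)*d + (M:ℝ)*d) := by gcongr
    _ = 4 * (M:ℝ) * d := by ring
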